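/- arXiv:2009.09062 — 4 statements merged into one kernel-verified Lean document; each statement's English description precedes it below -/
import Mathlib

section
/- Let r ∈ (0,1), and let h_k, h_re ≥ 0, f_k, f_re ∈ ℝ satisfy h_re ≤ r·h_k, h_k − h_re > 0, and f_re − f_k + h_k − h_re > 0. Define θ' = (1+r)(h_k − h_re)/(2(f_re − f_k + h_k − h_re)). Then θ'·f_re + (1−θ')·h_re ≤ θ'·f_k + (1−θ')·h_k + ((1−r)/2)(h_re − h_k). -/
theorem stmt_1 (r h_k h_re f_k f_re : ℝ)
    (hr : 0 < r) (hr1 : r < 1)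
    (hhk : 0 ≤ h_k) (hhre : 0 ≤ h_re)
    (hres : h_re ≤ r * h_k)
    (hpos1 : h_k - h_re > 0)
    (hpos2 : f_re - f_k + h_k - h_re > 0) :
    (1 + r) * (h_k - h_re) / (2 * (f_re - f_k + h_k - h_re)) * f_re +
      (1 - (1 + r) * (h_k - h_re) / (2 * (f_re - f_k + h_k - h_re))) * h_re ≤
    (1 + r) * (h_k - h_re) / (2 * (f_re - f_k + h_k - h_re)) * f_k +
      (1 - (1 + r) * (h_k - h_re) / (2 * (f_re - f_k + h_k - h_re))) * h_k +
      (1 - r) / 2 * (h_re - h_k) := by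
  have hD : (2 : ℝ) * (f_re - f_k + h_k - h_re) ≠ 0 := by positivity
  have : (1 + r) * (h_k - h_re) / (2 * (f_re - f_k + h_k - h_re)) * f_re +
      (1 - (1 + r) * (h_k - h_re) / (2 * (f_re - f_k + h_k - h_re))) * h_re =
    (1 + r) * (h_k - h_re) / (2 * (f_re - f_k + h_k - h_re)) * f_k +
      (1 - (1 + r) * (h_k - h_re) / (2 * (f_re - f_k + h_k - h_re))) * h_k +
      (1 - r) / 2 * (h_re - h_k) := by
    field_simp
    ring
  linarith [this.le]
end

section
/- Let r ∈ (0,1) and β > 0. Suppose h_k > 0, h_re ≥ 0, and f_k, f_re ∈ ℝ satisfy h_re ≤ r·h_k and f_re ≤ f_k + β·h_k, and suppose h_k − h_re > 0 and f_re − f_k + h_k − h_re > 0. Then θ' = (1+r)(h_k − h_re)/(2(f_re − f_k + h_k − h_re)) satisfies θ' ≥ (1−r²)/(2(β+1)). -/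
theorem stmt_2 (r β h_k h_re f_k f_re : ℝ)
    (hr : 0 < r) (hr1 : r < 1) (hβ : 0 < β)
    (hhk : 0 < h_k) (hhre : 0 ≤ h_re)
    (hres : h_re ≤ r * h_k)
    (hbeta : f_re ≤ f_k + β * h_k)
    (hpos1 : h_k - h_re > 0)
    (hpos2 : f_re - f_k + h_k - h_re > 0) :
    (1 + r) * (h_k - h_re) / (2 * (f_re - f_k + h_k - h_re)) ≥
      (1 - r ^ 2) / (2 * (β + 1)) := by
  rw [ge_iff_le, div_le_div_iff₀ (by positivity) (by positivity)]
  have hD : f_re - f_k + h_k - h_re ≤ (β + 1) * h_k := by nlinarith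
  have hN : (1 - r) * h_k ≤ h_k - h_re := by nlinarith
  have h1 : (0:ℝ) ≤ 1 - r ^ 2 := by nlinarith
  have h2 : (0:ℝ) ≤ (1 + r) * (β + 1) := by nlinarith
  nlinarith [mul_le_mul_of_nonneg_left hD h1, mul_le_mul_of_nonneg_left hN h2]
end

section
/- Define F : ℝ² → ℝ by F(z₁, z₂) = z₂² − z₁²·z₂ + z₁⁴ and M : ℝ² → ℝ by M(z₁, z₂) = z₂² − z₁²·z₂. Then (0,0) is a global minimizer of F, but (0,0) is not a local minimizer of M. -/
theorem stmt_13 :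
    (∀ z : ℝ × ℝ,
      ((0 : ℝ × ℝ).2 ^ 2 - (0 : ℝ × ℝ).1 ^ 2 * (0 : ℝ × ℝ).2 + (0 : ℝ × ℝ).1 ^ 4) ≤
        z.2 ^ 2 - z.1 ^ 2 * z.2 + z.1 ^ 4) ∧
    ¬ IsLocalMin (fun z : ℝ × ℝ => z.2 ^ 2 - z.1 ^ 2 * z.2) (0 : ℝ × ℝ) := by
  constructor
  · intro z
    simp only [Prod.fst_zero, Prod.snd_zero]
    nlinarith [sq_nonneg (z.2 - z.1 ^ 2 / 2), sq_nonneg (z.1 ^ 2)]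
  · intro h
    rw [IsLocalMin, IsMinFilter, Metric.eventually_nhds_iff] at h
    obtain ⟨ε, hε, h⟩ := h
    set t := min (ε / 2) 1 with ht
    have ht0 : 0 < t := lt_min (by linarith) one_pos
    have ht1 : t ≤ 1 := min_le_right _ _
    have htε : t < ε := lt_of_le_of_lt (min_le_left _ _) (by linarith)
    have := h (y := (t, t ^ 2 / 2)) ?_
    · simp only [Prod.fst_zero, Prod.snd_zero] at this
      nlinarith [pow_pos ht0 4]
    · rw [Prod.dist_eq]
      simp only [Real.dist_eq, sub_zero, Prod.fst_zero, Prod.snd_zero]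
      apply max_lt
      · rw [abs_of_pos ht0]; exact htε
      · rw [abs_of_pos (by positivity)]
        nlinarith
end

section
/- Let f : ℝ → ℝ be a polynomial (or an analytic function) and suppose x* is a local minimizer of f. Then for every p ≥ 1, x* is a local minimizer of the Taylor polynomial of f of order p centered at x*, provided that Taylor polynomial is not constant; more precisely, if T_p(x) = Σ_{i=0}^p f^{(i)}(x*)(x−x*)^i/i! is nonconstant, then x* is a local minimizer of T_p. -/
/-! Translate so that `x* = 0`. Near `0` a polynomial `Q` which is not constant reads
`Q y = Q 0 + y ^ k * S y` with `S 0 ≠ 0`, where `k ≥ 1` is the lowest degree of a non-constant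
monomial of `Q` and `S 0` its coefficient. Since `S` keeps its sign near `0`, `0` is a local
minimizer of `Q` exactly when `k` is even and `S 0 > 0`. Truncating `Q` at any degree at which
it is still not constant changes neither `k` nor `S 0`. -/

open Polynomial Filter Topology

theorem eventually_nonneg_pow_mul_iff {a : ℝ} (ha : a ≠ 0) {k : ℕ} :
    (∀ᶠ y in 𝓝 (0 : ℝ), 0 ≤ y ^ k * a) ↔ Even k ∧ 0 < a := by
  refine ⟨fun h => ?_, fun ⟨hk, ha⟩ => .of_forall fun y => mul_nonneg (hk.pow_nonneg y) ha.le⟩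
  obtain ⟨ε, hε, hball⟩ := Metric.eventually_nhds_iff.1 h
  have hδ : 0 < ε / 2 := half_pos hε
  have hright : 0 ≤ (ε / 2) ^ k * a := hball (by rw [Real.dist_0_eq_abs, abs_of_pos hδ]; linarith)
  have hleft : 0 ≤ (-(ε / 2)) ^ k * a :=
    hball (by rw [Real.dist_0_eq_abs, abs_neg, abs_of_pos hδ]; linarith)
  have ha : 0 < a := ((mul_nonneg_iff_of_pos_left (pow_pos hδ k)).1 hright).lt_of_ne' ha
  refine ⟨Nat.not_odd_iff_even.1 fun hodd => ?_, ha⟩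
  rw [hodd.neg_pow] at hleft
  exact hleft.not_gt (mul_neg_of_neg_of_pos (neg_neg_of_pos (pow_pos hδ k)) ha)

theorem isLocalMin_const_add_pow_mul_iff {S : ℝ → ℝ} (hS : ContinuousAt S 0) (hS0 : S 0 ≠ 0)
    (c : ℝ) {k : ℕ} (hk : k ≠ 0) :
    IsLocalMin (fun y => c + y ^ k * S y) 0 ↔ Even k ∧ 0 < S 0 := by
  have hsign : ∀ᶠ y in 𝓝 (0 : ℝ), 0 < S y * S 0 :=
    (hS.mul continuousAt_const).eventually (lt_mem_nhds (mul_self_pos.2 hS0))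
  rw [← eventually_nonneg_pow_mul_iff hS0, IsLocalMin, IsMinFilter]
  simp only [zero_pow hk, zero_mul, add_zero, le_add_iff_nonneg_right]
  refine eventually_congr (hsign.mono fun y hy => ?_)
  rw [← mul_nonneg_iff_of_pos_right (mul_self_pos.2 hS0),
    show y ^ k * S y * (S 0 * S 0) = y ^ k * S 0 * (S y * S 0) by ring,
    mul_nonneg_iff_of_pos_right hy]

namespace Polynomial

theorem exists_eq_X_pow_natTrailingDegree_mul {R : Type*} [Semiring R] (D : R[X]) :
    ∃ S : R[X], D = X ^ D.natTrailingDegree * S ∧ S.coeff 0 = D.trailingCoeff := by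
  obtain ⟨S, hS⟩ := (X_pow_dvd_iff (f := D)).2 fun d hd => coeff_eq_zero_of_lt_natTrailingDegree hd
  refine ⟨S, hS, ?_⟩
  have := congrArg (fun q : R[X] => q.coeff (0 + D.natTrailingDegree)) hS
  rwa [coeff_X_pow_mul, zero_add, eq_comm] at this

theorem isLocalMin_eval_zero_iff {Q : ℝ[X]} (hQ : Q - C (Q.coeff 0) ≠ 0) :
    IsLocalMin Q.eval 0 ↔
      Even (Q - C (Q.coeff 0)).natTrailingDegree ∧ 0 < (Q - C (Q.coeff 0)).trailingCoeff := by
  set D := Q - C (Q.coeff 0)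
  obtain ⟨S, hDS, hS0⟩ := exists_eq_X_pow_natTrailingDegree_mul D
  have hk : D.natTrailingDegree ≠ 0 := natTrailingDegree_ne_zero.2 ⟨hQ, by simp [D]⟩
  have hQS : Q.eval = fun y => Q.coeff 0 + y ^ D.natTrailingDegree * S.eval y := by
    funext y
    have := congrArg (eval y) hDS
    simp only [D, eval_sub, eval_C, eval_mul, eval_pow, eval_X] at this
    linarith
  rw [hQS, ← hS0, coeff_zero_eq_eval_zero S]
  exact isLocalMin_const_add_pow_mul_iff S.continuousAt
    (by rwa [← coeff_zero_eq_eval_zero, hS0, trailingCoeff_nonzero_iff_nonzero]) _ hk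

section TrailingAgreement

variable {R : Type*} [Semiring R] {D E : R[X]} {n : ℕ}

theorem natTrailingDegree_eq_of_coeff_eq (hE : E ≠ 0) (hn : E.natTrailingDegree < n)
    (h : ∀ i < n, D.coeff i = E.coeff i) : D.natTrailingDegree = E.natTrailingDegree := by
  have hD : D.coeff E.natTrailingDegree ≠ 0 := by
    rw [h _ hn]; exact coeff_natTrailingDegree_ne_zero.2 hE
  refine (natTrailingDegree_le_of_ne_zero hD).antisymm
    (le_natTrailingDegree (fun h0 => hD (by simp [h0])) fun m hm => ?_)
  rw [h m (hm.trans hn)]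
  exact coeff_eq_zero_of_lt_natTrailingDegree hm

theorem trailingCoeff_eq_of_coeff_eq (hE : E ≠ 0) (hn : E.natTrailingDegree < n)
    (h : ∀ i < n, D.coeff i = E.coeff i) : D.trailingCoeff = E.trailingCoeff := by
  rw [trailingCoeff, natTrailingDegree_eq_of_coeff_eq hE hn h, h _ hn, trailingCoeff]

end TrailingAgreement

theorem isLocalMin_eval_trunc {Q : ℝ[X]} (hQ : IsLocalMin Q.eval 0) {n : ℕ}
    (hn : (PowerSeries.trunc n (Q : PowerSeries ℝ)).natDegree ≠ 0) :
    IsLocalMin (PowerSeries.trunc n (Q : PowerSeries ℝ)).eval 0 := by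
  set T := PowerSeries.trunc n (Q : PowerSeries ℝ)
  have hT0 : T ≠ 0 := fun h => hn (by simp [h])
  have hTnc : T - C (T.coeff 0) ≠ 0 := fun h => hn (by rw [sub_eq_zero.1 h, natDegree_C])
  have hlt : (T - C (T.coeff 0)).natTrailingDegree < n :=
    (natTrailingDegree_le_natDegree _).trans_lt <| by
      rw [natDegree_sub_C, natDegree_lt_iff_degree_lt hT0]
      exact PowerSeries.degree_trunc_lt _ _
  have hcoeff : ∀ i < n, (Q - C (Q.coeff 0)).coeff i = (T - C (T.coeff 0)).coeff i := by
    intro i hi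
    have h0 : 0 < n := (Nat.zero_le i).trans_lt hi
    simp [T, PowerSeries.coeff_trunc, hi, h0]
  have htc := trailingCoeff_eq_of_coeff_eq hTnc hlt hcoeff
  have hQnc : Q - C (Q.coeff 0) ≠ 0 :=
    trailingCoeff_nonzero_iff_nonzero.1 (htc ▸ trailingCoeff_nonzero_iff_nonzero.2 hTnc)
  rw [isLocalMin_eval_zero_iff hTnc, ← htc, ← natTrailingDegree_eq_of_coeff_eq hTnc hlt hcoeff]
  exact (isLocalMin_eval_zero_iff hQnc).1 hQ

theorem iteratedDeriv_eval {𝕜 : Type*} [NontriviallyNormedField 𝕜] (P : 𝕜[X]) (i : ℕ) :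
    iteratedDeriv i (fun t => P.eval t) = fun t => (derivative^[i] P).eval t := by
  induction i with
  | zero => simp
  | succ i ih =>
    rw [iteratedDeriv_succ, ih, Function.iterate_succ_apply']
    funext t
    exact Polynomial.deriv _

theorem iteratedDeriv_eval_div_factorial {𝕜 : Type*} [NontriviallyNormedField 𝕜] [CharZero 𝕜]
    (P : 𝕜[X]) (r : 𝕜) (i : ℕ) :
    iteratedDeriv i (fun t => P.eval t) r / i.factorial = (taylor r P).coeff i := by
  rw [iteratedDeriv_eval, ← factorial_smul_hasseDeriv, taylor_coeff, LinearMap.smul_apply]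
  beta_reduce
  rw [eval_smul, nsmul_eq_mul, mul_div_cancel_left₀ _ (Nat.cast_ne_zero.2 i.factorial_ne_zero)]

theorem sum_range_iteratedDeriv_mul_pow_div_factorial {𝕜 : Type*} [NontriviallyNormedField 𝕜]
    [CharZero 𝕜] (P : 𝕜[X]) (r x : 𝕜) (n : ℕ) :
    ∑ i ∈ Finset.range n, iteratedDeriv i (fun t => P.eval t) r * (x - r) ^ i / i.factorial =
      (PowerSeries.trunc n (taylor r P : PowerSeries 𝕜)).eval (x - r) := by
  rw [eval, PowerSeries.eval₂_trunc_eq_sum_range]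
  refine Finset.sum_congr rfl fun i _ => ?_
  rw [mul_div_right_comm, iteratedDeriv_eval_div_factorial, coeff_coe, RingHom.id_apply]

end Polynomial

theorem stmt_14_general (P : Polynomial ℝ) (xstar : ℝ)
    (hmin : IsLocalMin (fun x => P.eval x) xstar) (p : ℕ) :
    ¬ (∀ x : ℝ,
        (∑ i ∈ Finset.range (p + 1),
          iteratedDeriv i (fun t => P.eval t) xstar * (x - xstar) ^ i / (Nat.factorial i)) =
        (∑ i ∈ Finset.range (p + 1),
          iteratedDeriv i (fun t => P.eval t) xstar * (xstar - xstar) ^ i / (Nat.factorial i))) →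
    IsLocalMin (fun x : ℝ =>
      ∑ i ∈ Finset.range (p + 1),
        iteratedDeriv i (fun t => P.eval t) xstar * (x - xstar) ^ i / (Nat.factorial i)) xstar := by
  simp only [sum_range_iteratedDeriv_mul_pow_div_factorial]
  set T := PowerSeries.trunc (p + 1) (taylor xstar P : PowerSeries ℝ)
  intro hnc
  have hT : T.natDegree ≠ 0 := fun h => hnc fun x => by rw [eq_C_of_natDegree_eq_zero h]; simp
  have hQ : IsLocalMin (taylor xstar P).eval 0 := by
    have hmin' : IsLocalMin P.eval (0 + xstar) := by rwa [zero_add]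
    simpa [Function.comp_def, taylor_eval] using
      hmin'.comp_continuous (g := (· + xstar)) (continuous_add_const xstar).continuousAt
  have hTmin : IsLocalMin T.eval (xstar - xstar) := by
    simpa using isLocalMin_eval_trunc hQ hT
  exact hTmin.comp_continuous (g := (· - xstar)) (continuous_sub_right xstar).continuousAt

theorem stmt_14 (P : Polynomial ℝ) (xstar : ℝ)
    (hmin : IsLocalMin (fun x => P.eval x) xstar) (p : ℕ) (hp : 1 ≤ p) :
    ¬ (∀ x : ℝ,
        (∑ i ∈ Finset.range (p + 1),
          iteratedDeriv i (fun t => P.eval t) xstar * (x - xstar) ^ i / (Nat.factorial i)) =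
        (∑ i ∈ Finset.range (p + 1),
          iteratedDeriv i (fun t => P.eval t) xstar * (xstar - xstar) ^ i / (Nat.factorial i))) →
    IsLocalMin (fun x : ℝ =>
      ∑ i ∈ Finset.range (p + 1),
        iteratedDeriv i (fun t => P.eval t) xstar * (x - xstar) ^ i / (Nat.factorial i)) xstar :=
  stmt_14_general P xstar hmin p
end
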